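/- arXiv:0901.3509 — 9 statements merged into one kernel-verified Lean document; each statement's English description precedes it below -/
import Mathlib

section
/- If (S,R) is a Catalan pair on X, then S∘R⁻¹ ⊆ R⁻¹; that is, if xSy and zRy, then zRx. -/
/-- A Catalan pair on a type `X`: `S` and `R` are strict orders, their
symmetrizations are disjoint and cover all pairs of distinct elements,
and `S ∘ R ⊆ R`. -/
def IsCatalanPair {X : Type*} (S R : X → X → Prop) : Prop :=
  (∀ x, ¬ S x x) ∧ (∀ x y z, S x y → S y z → S x z) ∧
  (∀ x, ¬ R x x) ∧ (∀ x y z, R x y → R y z → R x z) ∧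
  (∀ x y, x ≠ y → (R x y ∨ R y x) ∨ (S x y ∨ S y x)) ∧
  (∀ x y, (R x y ∨ R y x) → ¬ (S x y ∨ S y x)) ∧
  (∀ x y z, S x y → R y z → R x z)

/-!
Given `x S y` and `z R y`, compare `x` with `z`. If `x = z`, `x R z` or `x S z`, then `x R y`
(by transitivity of `R`, resp. `S ∘ R ⊆ R`); if `z S x`, then `z S y`. Each contradicts the
disjointness of `R` and `S`, so the only remaining case `z R x` holds.
-/

theorem IsCatalanPair.not_R_of_S {X : Type*} {S R : X → X → Prop} (h : IsCatalanPair S R)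
    {x y : X} (hS : S x y) : ¬ R x y :=
  fun hR ↦ h.2.2.2.2.2.1 x y (Or.inl hR) (Or.inl hS)

theorem catalan_pair_S_comp_Rinv {X : Type*} (S R : X → X → Prop)
    (h : IsCatalanPair S R) : ∀ x y z : X, S x y → R z y → R z x := by
  have not_R_of_S : ∀ {a b : X}, S a b → ¬ R a b := h.not_R_of_S
  obtain ⟨-, hS_trans, -, hR_trans, h_total, -, hSR⟩ := h
  intro x y z hxy hzy
  have hxz : x ≠ z := by
    rintro rfl
    exact not_R_of_S hxy hzy
  rcases h_total x z hxz with (hR_xz | hR_zx) | (hS_xz | hS_zx)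
  · exact absurd (hR_trans x z y hR_xz hzy) (not_R_of_S hxy)
  · exact hR_zx
  · exact absurd (hSR x z y hS_xz hzy) (not_R_of_S hxy)
  · exact absurd hzy (not_R_of_S (hS_trans z x y hS_zx hxy))
end

section
/- If (S,R) is a Catalan pair on X, then R∘S ⊆ R ∪ S; that is, if xRy and ySz, then xRz or xSz. -/
/-! Given `x R y S z`, the points `x` and `z` are comparable unless equal, and each of
`x = z`, `z R x`, `z S x` closes a cycle that `S ∘ R ⊆ R` turns into an `R`-loop. -/

namespace IsCatalanPair

variable {X : Type*} {S R : X → X → Prop} {x y z : X}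

theorem R_irrefl (h : IsCatalanPair S R) (x : X) : ¬ R x x := h.2.2.1 x

theorem S_trans (h : IsCatalanPair S R) : S x y → S y z → S x z := h.2.1 x y z

theorem R_trans (h : IsCatalanPair S R) : R x y → R y z → R x z := h.2.2.2.1 x y z

theorem related_of_ne (h : IsCatalanPair S R) (hxy : x ≠ y) :
    (R x y ∨ R y x) ∨ (S x y ∨ S y x) :=
  h.2.2.2.2.1 x y hxy

theorem R_of_S_of_R (h : IsCatalanPair S R) : S x y → R y z → R x z := h.2.2.2.2.2.2 x y z

theorem ne_of_R_of_S (h : IsCatalanPair S R) (hxy : R x y) (hyz : S y z) : x ≠ z := by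
  rintro rfl
  exact h.R_irrefl y (h.R_of_S_of_R hyz hxy)

theorem not_R_of_R_of_S (h : IsCatalanPair S R) (hxy : R x y) (hyz : S y z) : ¬ R z x :=
  fun hzx => h.R_irrefl x (h.R_trans hxy (h.R_of_S_of_R hyz hzx))

theorem not_S_of_R_of_S (h : IsCatalanPair S R) (hxy : R x y) (hyz : S y z) : ¬ S z x :=
  fun hzx => h.R_irrefl y (h.R_of_S_of_R (h.S_trans hyz hzx) hxy)

end IsCatalanPair

theorem catalan_pair_R_comp_S {X : Type*} (S R : X → X → Prop)
    (h : IsCatalanPair S R) : ∀ x y z : X, R x y → S y z → R x z ∨ S x z := by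
  intro x y z hxy hyz
  rcases h.related_of_ne (h.ne_of_R_of_S hxy hyz) with (hxz | hzx) | (hxz | hzx)
  · exact Or.inl hxz
  · exact absurd hzx (h.not_R_of_R_of_S hxy hyz)
  · exact Or.inr hxz
  · exact absurd hzx (h.not_S_of_R_of_S hxy hyz)
end

section
/- Let (S,R) be a pair of binary relations on X such that S and R are strict orders, the symmetrizations of R and S are disjoint, and their union is X² minus the diagonal. Then the axiom S∘R ⊆ R is equivalent to the axiom S̄∘R ⊆ R ∪ S⁻¹ (where S̄ = S ∪ S⁻¹). -/
/-! The converse half `S⁻¹ ∘ R ⊆ R ∪ S⁻¹` of the starred axiom holds for every such pair: given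
`S y x` and `R y z`, the cases `R z x` and `S x z` would relate `y` to `x` resp. `z` by both `R`
and `S`, by transitivity. The remaining half differs from `S ∘ R ⊆ R` only by the alternative
`S z x` for `S x y`, `R y z`, which transitivity of `S` and disjointness also exclude. -/

section

variable {X : Type*} {S R : X → X → Prop}

theorem converse_comp_subset_union
    (hStrans : ∀ x y z, S x y → S y z → S x z)
    (hRtrans : ∀ x y z, R x y → R y z → R x z)
    (htot : ∀ x y, x ≠ y → (R x y ∨ R y x) ∨ (S x y ∨ S y x))
    (hint : ∀ x y, (R x y ∨ R y x) → ¬ (S x y ∨ S y x))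
    {x y z : X} (hyx : S y x) (hyz : R y z) : R x z ∨ S z x := by
  by_cases hxz : x = z
  · subst hxz
    exact absurd (Or.inl hyx) (hint y x (Or.inl hyz))
  rcases htot x z hxz with (hxz | hzx) | (hxz | hzx)
  · exact Or.inl hxz
  · exact absurd (Or.inl hyx) (hint y x (Or.inl (hRtrans y z x hyz hzx)))
  · exact absurd (Or.inl (hStrans y x z hyx hxz)) (hint y z (Or.inl hyz))
  · exact Or.inr hzx

theorem not_comp_comp_of_disjoint
    (hStrans : ∀ x y z, S x y → S y z → S x z)
    (hint : ∀ x y, (R x y ∨ R y x) → ¬ (S x y ∨ S y x))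
    {x y z : X} (hxy : S x y) (hyz : R y z) : ¬ S z x :=
  fun hzx => hint y z (Or.inl hyz) (Or.inr (hStrans z x y hzx hxy))

end

theorem comp_iff_comp_star_general {X : Type*} (S R : X → X → Prop)
    (hStrans : ∀ x y z, S x y → S y z → S x z)
    (hRtrans : ∀ x y z, R x y → R y z → R x z)
    (htot : ∀ x y, x ≠ y → (R x y ∨ R y x) ∨ (S x y ∨ S y x))
    (hint : ∀ x y, (R x y ∨ R y x) → ¬ (S x y ∨ S y x)) :
    (∀ x y z, S x y → R y z → R x z) ↔
      (∀ x y z, (S x y ∨ S y x) → R y z → R x z ∨ S z x) := by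
  constructor
  · rintro hcomp x y z (hxy | hyx) hyz
    · exact Or.inl (hcomp x y z hxy hyz)
    · exact converse_comp_subset_union hStrans hRtrans htot hint hyx hyz
  · intro hstar x y z hxy hyz
    exact (hstar x y z (Or.inl hxy) hyz).resolve_right
      (not_comp_comp_of_disjoint hStrans hint hxy hyz)

theorem comp_iff_comp_star {X : Type*} (S R : X → X → Prop)
    (hSirr : ∀ x, ¬ S x x) (hStrans : ∀ x y z, S x y → S y z → S x z)
    (hRirr : ∀ x, ¬ R x x) (hRtrans : ∀ x y z, R x y → R y z → R x z)
    (htot : ∀ x y, x ≠ y → (R x y ∨ R y x) ∨ (S x y ∨ S y x))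
    (hint : ∀ x y, (R x y ∨ R y x) → ¬ (S x y ∨ S y x)) :
    (∀ x y z, S x y → R y z → R x z) ↔
      (∀ x y z, (S x y ∨ S y x) → R y z → R x z ∨ S z x) :=
  comp_iff_comp_star_general S R hStrans hRtrans htot hint
end

section
/- Let (S,R) be a Catalan pair on a finite set X, and let x and y be two distinct maximal elements of the strict order S. Then there is no element t ∈ X with tSx and tSy. -/
/-! If `t S x`, `t S y` and `x R y`, then `S ∘ R ⊆ R` gives `t R y`, which cannot coexist with
`t S y`; so two distinct elements with a common `S`-lower bound are `S`-comparable, and two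
distinct `S`-maximal elements are never comparable. -/

namespace IsCatalanPair

variable {X : Type*} {S R : X → X → Prop}

theorem not_r_of_s (h : IsCatalanPair S R) {a b : X} (hab : S a b) : ¬ R a b :=
  fun hR => h.2.2.2.2.2.1 a b (Or.inl hR) (Or.inl hab)

theorem not_r_of_common_lowerBound (h : IsCatalanPair S R) {t x y : X}
    (htx : S t x) (hty : S t y) : ¬ R x y :=
  fun hR => h.not_r_of_s hty (h.2.2.2.2.2.2 t x y htx hR)

theorem s_or_s_of_common_lowerBound (h : IsCatalanPair S R) {t x y : X}
    (htx : S t x) (hty : S t y) (hxy : x ≠ y) : S x y ∨ S y x := by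
  rcases h.2.2.2.2.1 x y hxy with (hR | hR) | hS
  · exact absurd hR (h.not_r_of_common_lowerBound htx hty)
  · exact absurd hR (h.not_r_of_common_lowerBound hty htx)
  · exact hS

end IsCatalanPair

theorem catalan_pair_maximal_disjoint_ideals_general {X : Type*}
    (S R : X → X → Prop) (h : IsCatalanPair S R) (x y : X) (hxy : x ≠ y)
    (hx : ∀ z, ¬ S x z) (hy : ∀ z, ¬ S y z) :
    ¬ ∃ t : X, S t x ∧ S t y := by
  rintro ⟨t, htx, hty⟩
  rcases h.s_or_s_of_common_lowerBound htx hty hxy with hS | hS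
  · exact hx y hS
  · exact hy x hS

theorem catalan_pair_maximal_disjoint_ideals {X : Type*} [Finite X]
    (S R : X → X → Prop) (h : IsCatalanPair S R) (x y : X) (hxy : x ≠ y)
    (hx : ∀ z, ¬ S x z) (hy : ∀ z, ¬ S y z) :
    ¬ ∃ t : X, S t x ∧ S t y :=
  catalan_pair_maximal_disjoint_ideals_general S R h x y hxy hx hy
end

section
/- Let (S,R) be a Catalan pair on X and a Catalan pair (S',R') on Y with X ∩ Y = ∅, and let z ∉ X ∪ Y. Define S'' = S ∪ S' ∪ (X×{z}) and R'' = R ∪ R' ∪ ((X ∪ {z})×Y). Then (S'',R'') is a Catalan pair on {z} ∪ X ∪ Y. -/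
/-!
The composition is built in two steps. First adjoin `z` to `X` as a new `S`-maximum above every
point of `X`, leaving `R` unchanged. Then put the resulting pair on `insert z X` entirely
`R`-below the pair on `Y`. Each step preserves the axioms of a Catalan pair by a case analysis on
where the points involved lie; disjointness of the carriers rules out the mixed cases.
-/

/-- A Catalan pair on a subset `X` of a type `α`. -/
def CatalanPairOn {α : Type*} (X : Set α) (S R : α → α → Prop) : Prop :=
  (∀ x y, S x y → x ∈ X ∧ y ∈ X) ∧ (∀ x y, R x y → x ∈ X ∧ y ∈ X) ∧
  (∀ x, ¬ S x x) ∧ (∀ x y z, S x y → S y z → S x z) ∧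
  (∀ x, ¬ R x x) ∧ (∀ x y z, R x y → R y z → R x z) ∧
  (∀ x, x ∈ X → ∀ y, y ∈ X → x ≠ y → (R x y ∨ R y x) ∨ (S x y ∨ S y x)) ∧
  (∀ x y, (R x y ∨ R y x) → ¬ (S x y ∨ S y x)) ∧
  (∀ x y z, S x y → R y z → R x z)

namespace CatalanPairOn

variable {α : Type*} {X Y : Set α} {S R S' R' : α → α → Prop}

theorem insert_top (h : CatalanPairOn X S R) {z : α} (hz : z ∉ X) :
    CatalanPairOn (insert z X) (fun a b => S a b ∨ (a ∈ X ∧ b = z)) R := by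
  obtain ⟨hS, hR, S_irrefl, S_trans, R_irrefl, R_trans, total, disj, comp⟩ := h
  refine ⟨?_, ?_, ?_, ?_, R_irrefl, R_trans, ?_, ?_, ?_⟩
  all_goals grind

theorem union (h : CatalanPairOn X S R) (h' : CatalanPairOn Y S' R') (hXY : Disjoint X Y) :
    CatalanPairOn (X ∪ Y) (fun a b => S a b ∨ S' a b)
      (fun a b => R a b ∨ R' a b ∨ (a ∈ X ∧ b ∈ Y)) := by
  obtain ⟨hS, hR, S_irrefl, S_trans, R_irrefl, R_trans, total, disj, comp⟩ := h
  obtain ⟨hS', hR', S_irrefl', S_trans', R_irrefl', R_trans', total', disj', comp'⟩ := h'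
  replace hXY := Set.disjoint_left.1 hXY
  refine ⟨?_, ?_, ?_, ?_, ?_, ?_, ?_, ?_, ?_⟩
  all_goals grind

end CatalanPairOn

theorem catalan_pair_composition {α : Type*} (X Y : Set α) (S R S' R' : α → α → Prop)
    (h1 : CatalanPairOn X S R) (h2 : CatalanPairOn Y S' R')
    (hdisj : Disjoint X Y) (z : α) (hz : z ∉ X ∪ Y) :
    CatalanPairOn (insert z (X ∪ Y))
      (fun a b => S a b ∨ S' a b ∨ (a ∈ X ∧ b = z))
      (fun a b => R a b ∨ R' a b ∨ ((a ∈ X ∨ a = z) ∧ b ∈ Y)) := by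
  rw [Set.mem_union, not_or] at hz
  have h := (h1.insert_top hz.1).union h2 (Set.disjoint_insert_left.2 ⟨hz.2, hdisj⟩)
  rw [Set.insert_union] at h
  convert h using 3
  · tauto
  · simp only [Set.mem_insert_iff]; tauto
end

section
/- The number of isomorphism classes of Catalan pairs on a set of cardinality n is the n-th Catalan number C_n. -/
abbrev CatalanPair (X : Type*) :=
  {p : (X → X → Prop) × (X → X → Prop) // IsCatalanPair p.1 p.2}

namespace CatalanPair

variable {X : Type*}

def Isomorphic (p q : CatalanPair X) : Prop :=
  ∃ ξ : X ≃ X, ∀ x y, (p.1.1 x y ↔ q.1.1 (ξ x) (ξ y)) ∧ (p.1.2 x y ↔ q.1.2 (ξ x) (ξ y))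

theorem isomorphic_equivalence : Equivalence (@Isomorphic X) where
  refl _ := ⟨Equiv.refl X, fun _ _ => ⟨Iff.rfl, Iff.rfl⟩⟩
  symm := fun ⟨ξ, h⟩ => ⟨ξ.symm, fun x y => by
    simpa only [Equiv.apply_symm_apply, Iff.comm] using h (ξ.symm x) (ξ.symm y)⟩
  trans := fun ⟨ξ, h⟩ ⟨η, h'⟩ => ⟨ξ.trans η, fun x y =>
    ⟨(h x y).1.trans (h' (ξ x) (ξ y)).1, (h x y).2.trans (h' (ξ x) (ξ y)).2⟩⟩

end CatalanPair

open CatalanPair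

namespace IsCatalanPair

variable {X Y : Type*} {S R : X → X → Prop}

theorem isStrictTotalOrder (h : IsCatalanPair S R) :
    IsStrictTotalOrder X (fun x y => S x y ∨ R x y) := by
  obtain ⟨hSi, hSt, hRi, hRt, htot, hdisj, hSR⟩ := h
  refine { trichotomous := ?_, irrefl := ?_, trans := ?_ } <;> grind

theorem comap (h : IsCatalanPair S R) {f : Y → X} (hf : Function.Injective f) :
    IsCatalanPair (fun x y => S (f x) (f y)) (fun x y => R (f x) (f y)) := by
  obtain ⟨hSi, hSt, hRi, hRt, htot, hdisj, hSR⟩ := h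
  exact ⟨fun _ => hSi _, fun _ _ _ => hSt _ _ _, fun _ => hRi _, fun _ _ _ => hRt _ _ _,
    fun _ _ hxy => htot _ _ (hf.ne hxy), fun _ _ => hdisj _ _, fun _ _ _ => hSR _ _ _⟩

end IsCatalanPair

theorem exists_equiv_fin_lt_iff {α : Type*} [Fintype α] {n : ℕ} (hα : Fintype.card α = n)
    (T : α → α → Prop) [IsStrictTotalOrder α T] :
    ∃ e : Fin n ≃ α, ∀ x y, x < y ↔ T (e x) (e y) := by
  classical
  let := linearOrderOfSTO T
  exact ⟨(monoEquivOfFin α hα).toEquiv, fun x y => (monoEquivOfFin α hα).lt_iff_lt.symm⟩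

/-- A Catalan pair on `{0, …, n-1}` whose union is `<`, recorded by `S` alone (then `R` is
`<` minus `S`). It lives on `ℕ` so that blocks can be cut out and shifted. -/
structure IsCatalanRel (n : ℕ) (S : ℕ → ℕ → Prop) : Prop where
  bounded : ∀ x y, S x y → x < y ∧ y < n
  trans : ∀ x y z, S x y → S y z → S x z
  compl_trans : ∀ x y z, x < y → y < z → z < n → ¬ S x y → ¬ S y z → ¬ S x z
  trans_compl : ∀ x y z, y < z → z < n → S x y → ¬ S y z → ¬ S x z

abbrev CatalanRel (n : ℕ) := {S : ℕ → ℕ → Prop // IsCatalanRel n S}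

namespace IsCatalanRel

variable {n : ℕ} {S : ℕ → ℕ → Prop}

theorem eq_of_forall_fin {S' : ℕ → ℕ → Prop} (h : IsCatalanRel n S) (h' : IsCatalanRel n S')
    (hSS' : ∀ x y : Fin n, S x y ↔ S' x y) : S = S' := by
  ext x y
  constructor
  · intro hxy
    obtain ⟨hx, hy⟩ := h.bounded x y hxy
    exact (hSS' ⟨x, hx.trans hy⟩ ⟨y, hy⟩).1 hxy
  · intro hxy
    obtain ⟨hx, hy⟩ := h'.bounded x y hxy
    exact (hSS' ⟨x, hx.trans hy⟩ ⟨y, hy⟩).2 hxy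

theorem isCatalanPair (h : IsCatalanRel n S) :
    IsCatalanPair (fun x y : Fin n => S x y) (fun x y => x < y ∧ ¬ S x y) := by
  obtain ⟨b, a, t, c⟩ := h
  unfold IsCatalanPair
  refine ⟨?_, ?_, ?_, ?_, ?_, ?_, ?_⟩ <;> grind

end IsCatalanRel

instance (n : ℕ) : Finite (CatalanRel n) :=
  Finite.of_injective (fun S : CatalanRel n => fun x y : Fin n => S.1 x y) fun S S' h =>
    Subtype.ext (S.2.eq_of_forall_fin S'.2 fun x y => Iff.of_eq (congr_fun₂ h x y))

def CatalanRel.toCatalanPair {n : ℕ} (S : CatalanRel n) : CatalanPair (Fin n) :=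
  ⟨(fun x y => S.1 x y, fun x y => x < y ∧ ¬ S.1 x y), S.2.isCatalanPair⟩

def natRelOfFin {n : ℕ} (S : Fin n → Fin n → Prop) : ℕ → ℕ → Prop :=
  fun a b => ∃ (ha : a < n) (hb : b < n), S ⟨a, ha⟩ ⟨b, hb⟩

theorem IsCatalanPair.isCatalanRel_natRelOfFin {n : ℕ} {S R : Fin n → Fin n → Prop}
    (h : IsCatalanPair S R) (hlt : ∀ x y, S x y ∨ R x y ↔ x < y) :
    IsCatalanRel n (natRelOfFin S) := by
  obtain ⟨hSi, hSt, hRi, hRt, htot, hdisj, hSR⟩ := h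
  constructor <;> unfold natRelOfFin <;> grind

theorem CatalanRel.eq_of_isomorphic {n : ℕ} {A B : CatalanRel n}
    (h : Isomorphic A.toCatalanPair B.toCatalanPair) : A = B := by
  obtain ⟨ξ, hξ⟩ := h
  have hmono : StrictMono ξ := by
    intro x y hxy
    by_cases hA : A.1 x y
    · exact (B.2.bounded _ _ ((hξ x y).1.1 hA)).1
    · exact ((hξ x y).2.1 ⟨hxy, hA⟩).1
  have hid : ∀ x, ξ x = x := DFunLike.congr_fun
    (Subsingleton.elim (hmono.orderIsoOfSurjective ξ ξ.surjective) (OrderIso.refl _))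
  refine Subtype.ext (A.2.eq_of_forall_fin B.2 fun x y => ?_)
  have := (hξ x y).1
  rwa [hid, hid] at this

theorem CatalanPair.exists_isomorphic_toCatalanPair {n : ℕ} (p : CatalanPair (Fin n)) :
    ∃ A : CatalanRel n, Isomorphic A.toCatalanPair p := by
  obtain ⟨⟨S, R⟩, hp⟩ := p
  have := hp.isStrictTotalOrder
  obtain ⟨e, he⟩ := exists_equiv_fin_lt_iff (Fintype.card_fin n) (fun x y => S x y ∨ R x y)
  have hsorted := (hp.comap e.injective).isCatalanRel_natRelOfFin fun x y => (he x y).symm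
  refine ⟨⟨_, hsorted⟩, e, fun x y => ?_⟩
  obtain ⟨-, -, -, -, -, hdisj, -⟩ := hp
  simp only [CatalanRel.toCatalanPair, natRelOfFin, Fin.eta, exists_prop, x.isLt, y.isLt,
    true_and, he x y]
  exact ⟨fun ⟨hT, hS⟩ => hT.resolve_left hS,
    fun hR => ⟨Or.inr hR, fun hS => hdisj _ _ (Or.inl hR) (Or.inl hS)⟩⟩

theorem card_quot_isomorphic (n : ℕ) :
    Nat.card (Quot (@Isomorphic (Fin n))) = Nat.card (CatalanRel n) := by
  refine (Nat.card_eq_of_bijective (fun A => Quot.mk _ A.toCatalanPair) ⟨?_, ?_⟩).symm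
  · intro A B h
    exact CatalanRel.eq_of_isomorphic (isomorphic_equivalence.eqvGen_iff.1 (Quot.eqvGen_exact h))
  · rintro ⟨p⟩
    obtain ⟨A, hA⟩ := p.exists_isomorphic_toCatalanPair
    exact ⟨A, Quot.sound hA⟩

def IsCatalanRoot (S : ℕ → ℕ → Prop) (r : ℕ) : Prop := (∀ x < r, S x r) ∧ ∀ y, ¬ S r y

theorem IsCatalanRoot.unique {S : ℕ → ℕ → Prop} {r₁ r₂ : ℕ} (h₁ : IsCatalanRoot S r₁)
    (h₂ : IsCatalanRoot S r₂) : r₁ = r₂ := by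
  by_contra hne
  rcases Nat.lt_or_gt_of_ne hne with h | h
  · exact h₁.2 r₂ (h₂.1 r₁ h)
  · exact h₂.2 r₁ (h₁.1 r₂ h)

def glueRel (i : ℕ) (S₁ S₂ : ℕ → ℕ → Prop) : ℕ → ℕ → Prop :=
  fun x y => (y < i ∧ S₁ x y) ∨ (x < i ∧ y = i) ∨ (i < x ∧ i < y ∧ S₂ (x - i - 1) (y - i - 1))

def leftRel (i : ℕ) (S : ℕ → ℕ → Prop) : ℕ → ℕ → Prop := fun x y => y < i ∧ S x y

def rightRel (i : ℕ) (S : ℕ → ℕ → Prop) : ℕ → ℕ → Prop := fun x y => S (x + i + 1) (y + i + 1)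

namespace IsCatalanRel

variable {n i : ℕ} {S S₁ S₂ : ℕ → ℕ → Prop}

theorem exists_isCatalanRoot (h : IsCatalanRel (n + 1) S) : ∃ r ≤ n, IsCatalanRoot S r := by
  classical
  have hn : ∀ y, ¬ S n y := fun y hy => by have := h.bounded n y hy; omega
  have hmax : ∃ r, ∀ y, ¬ S r y := ⟨n, hn⟩
  set r := Nat.find hmax
  have hr : ∀ y, ¬ S r y := Nat.find_spec hmax
  have below : ∀ x < r, ∃ y, S x y := fun x hx => by simpa using Nat.find_min hmax hx
  refine ⟨r, Nat.find_min' hmax hn, ?_, hr⟩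
  intro x hx
  by_contra hxr
  -- the counterexample closest to `r` has an `S`-successor, which fits nowhere relative to `r`
  obtain ⟨x, ⟨hx, hxr⟩, hmin⟩ :=
    (measure (r - ·)).wf.has_min {x | x < r ∧ ¬ S x r} ⟨x, hx, hxr⟩
  obtain ⟨y, hxy⟩ := below x hx
  obtain ⟨hxy_lt, hy_lt⟩ := h.bounded x y hxy
  rcases lt_trichotomy y r with hy | rfl | hy
  · refine hxr (h.trans x y r hxy (by_contra fun hyr => hmin y ⟨hy, hyr⟩ ?_))
    show r - y < r - x
    omega
  · exact hxr hxy
  · exact h.compl_trans x r y hx hy hy_lt hxr (hr y) hxy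

theorem glue (hi : i ≤ n) (h₁ : IsCatalanRel i S₁) (h₂ : IsCatalanRel (n - i) S₂) :
    IsCatalanRel (n + 1) (glueRel i S₁ S₂) := by
  obtain ⟨b₁, a₁, t₁, c₁⟩ := h₁
  obtain ⟨b₂, a₂, t₂, c₂⟩ := h₂
  constructor <;> unfold glueRel <;> grind

theorem left (h : IsCatalanRel (n + 1) S) : IsCatalanRel i (leftRel i S) := by
  obtain ⟨b, a, t, c⟩ := h
  constructor <;> unfold leftRel <;> grind

theorem right (h : IsCatalanRel (n + 1) S) : IsCatalanRel (n - i) (rightRel i S) := by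
  obtain ⟨b, a, t, c⟩ := h
  constructor <;> unfold rightRel <;> grind

theorem isCatalanRoot_glueRel (h₁ : IsCatalanRel i S₁) : IsCatalanRoot (glueRel i S₁ S₂) i := by
  have := h₁.bounded
  unfold IsCatalanRoot glueRel
  grind

theorem leftRel_glueRel (h₁ : IsCatalanRel i S₁) : leftRel i (glueRel i S₁ S₂) = S₁ := by
  have := h₁.bounded
  ext x y
  unfold leftRel glueRel
  grind

theorem rightRel_glueRel (h₁ : IsCatalanRel i S₁) : rightRel i (glueRel i S₁ S₂) = S₂ := by
  have := h₁.bounded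
  ext x y
  unfold rightRel glueRel
  grind

theorem glueRel_leftRel_rightRel (h : IsCatalanRel n S) {r : ℕ} (hr : IsCatalanRoot S r) :
    glueRel r (leftRel r S) (rightRel r S) = S := by
  obtain ⟨b, a, t, c⟩ := h
  ext x y
  unfold glueRel leftRel rightRel IsCatalanRoot at *
  grind

end IsCatalanRel

def CatalanRel.glue (n : ℕ) :
    (Σ i : Fin (n + 1), CatalanRel i × CatalanRel (n - i)) → CatalanRel (n + 1) :=
  fun A => ⟨glueRel A.1 A.2.1.1 A.2.2.1, A.2.1.2.glue (by omega) A.2.2.2⟩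

theorem CatalanRel.glue_bijective (n : ℕ) : Function.Bijective (CatalanRel.glue n) := by
  constructor
  · rintro ⟨i, A, B⟩ ⟨j, C, D⟩ h
    have hg : glueRel i A.1 B.1 = glueRel j C.1 D.1 := congrArg Subtype.val h
    obtain rfl : i = j := Fin.ext <|
      (A.2.isCatalanRoot_glueRel (S₂ := B.1)).unique (hg ▸ C.2.isCatalanRoot_glueRel)
    have hAC : A = C := Subtype.ext <| by
      rw [← A.2.leftRel_glueRel (S₂ := B.1), hg, C.2.leftRel_glueRel]
    have hBD : B = D := Subtype.ext <| by
      rw [← A.2.rightRel_glueRel (S₂ := B.1), hg, C.2.rightRel_glueRel]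
    rw [hAC, hBD]
  · rintro ⟨S, hS⟩
    obtain ⟨r, hr, hroot⟩ := hS.exists_isCatalanRoot
    exact ⟨⟨⟨r, by omega⟩, ⟨_, hS.left⟩, ⟨_, hS.right⟩⟩,
      Subtype.ext (hS.glueRel_leftRel_rightRel hroot)⟩

theorem card_catalanRel (n : ℕ) : Nat.card (CatalanRel n) = catalan n := by
  induction n using Nat.strong_induction_on with
  | _ n ih =>
  cases n with
  | zero =>
    have empty : IsCatalanRel 0 fun _ _ => False := by constructor <;> simp
    rw [catalan_zero, Nat.card_eq_one_iff_unique]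
    exact ⟨⟨fun A B => Subtype.ext (A.2.eq_of_forall_fin B.2 fun x => x.elim0)⟩, ⟨⟨_, empty⟩⟩⟩
  | succ n =>
    rw [← Nat.card_eq_of_bijective _ (CatalanRel.glue_bijective n), Nat.card_sigma, catalan_succ]
    refine Finset.sum_congr rfl fun i _ => ?_
    rw [Nat.card_prod, ih i (by omega), ih (n - i) (by omega)]

theorem card_catalan_pairs (n : ℕ) :
    Nat.card (Quot (fun (p q : {p : (Fin n → Fin n → Prop) × (Fin n → Fin n → Prop) //
        IsCatalanPair p.1 p.2}) =>
      ∃ ξ : Fin n ≃ Fin n, ∀ x y : Fin n,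
        (p.1.1 x y ↔ q.1.1 (ξ x) (ξ y)) ∧ (p.1.2 x y ↔ q.1.2 (ξ x) (ξ y)))) =
    catalan n :=
  (card_quot_isomorphic n).trans (card_catalanRel n)
end

section
/- Let (S,R) be a Catalan pair on X with ∼_R defined by x ∼_R y iff for all z, z is R-comparable with x iff z is R-comparable with y. Then for all x,y ∈ X, xRy holds iff x'Ry' for all x' ∼_R x and y' ∼_R y. -/
namespace Relation

variable {X : Type*} {R : X → X → Prop} {x x' y y' : X}

theorem not_symmGen_of_forall_symmGen_iff [Std.Irrefl R]
    (h : ∀ z, SymmGen R z x' ↔ SymmGen R z x) : ¬ SymmGen R x x' :=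
  fun hxx' => ((h x).1 hxx').elim (irrefl x) (irrefl x)

variable [Std.Irrefl R] [IsTrans X R]

theorem rel_of_forall_symmGen_iff_left (h : ∀ z, SymmGen R z x' ↔ SymmGen R z x)
    (hxy : R x y) : R x' y := by
  rcases (h y).2 (.of_rel_symm hxy) with hyx' | hx'y
  · exact absurd (.of_rel (_root_.trans hxy hyx')) (not_symmGen_of_forall_symmGen_iff h)
  · exact hx'y

theorem rel_of_forall_symmGen_iff_right (h : ∀ z, SymmGen R z y' ↔ SymmGen R z y)
    (hxy : R x y) : R x y' := by
  rcases (h x).2 (.of_rel hxy) with hxy' | hy'x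
  · exact hxy'
  · exact absurd (.of_rel_symm (_root_.trans hy'x hxy)) (not_symmGen_of_forall_symmGen_iff h)

end Relation

theorem catalan_pair_R_classwise {X : Type*} (S R : X → X → Prop)
    (h : IsCatalanPair S R) (x y : X) :
    R x y ↔ ∀ x' y' : X, (∀ z, (R z x' ∨ R x' z) ↔ (R z x ∨ R x z)) →
      (∀ z, (R z y' ∨ R y' z) ↔ (R z y ∨ R y z)) → R x' y' := by
  obtain ⟨-, -, hRirr, hRtrans, -, -, -⟩ := h
  have : IsStrictOrder X R := { irrefl := hRirr, trans := hRtrans }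
  refine ⟨fun hxy x' y' hx hy => ?_, fun H => H x y (fun _ => .rfl) (fun _ => .rfl)⟩
  exact Relation.rel_of_forall_symmGen_iff_right hy
    (Relation.rel_of_forall_symmGen_iff_left hx hxy)
end

section
/- If (S,R) is a Catalan pair on a finite set X, then the poset [X,R] contains no subposet isomorphic to 2+2 (four distinct elements x,y,z,t with xRy, zRt and no other R-relations among them) and no subposet isomorphic to Z₄ (four distinct elements x,y,z,t with xRy, xRt, zRt and no other R-relations among them). -/
namespace IsCatalanPair

variable {X : Type*} {S R : X → X → Prop} {a b c d : X}

theorem S_of_R_of_incomparable (h : IsCatalanPair S R) (hab : R a b) (hac : a ≠ c)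
    (nac : ¬ (R a c ∨ R c a)) (nbc : ¬ (R b c ∨ R c b)) : S a c := by
  obtain ⟨-, -, -, -, htot, -, hcomp⟩ := h
  rcases (htot a c hac).resolve_left nac with hSac | hSca
  · exact hSac
  · exact absurd (Or.inr (hcomp c a b hSca hab)) nbc

theorem false_of_R_of_R_of_incomparable (h : IsCatalanPair S R) (hab : R a b) (hcd : R c d)
    (hac : a ≠ c) (hbc : b ≠ c) (nac : ¬ (R a c ∨ R c a)) (nbc : ¬ (R b c ∨ R c b))
    (nbd : ¬ (R b d ∨ R d b)) : False := by
  have hSac : S a c := h.S_of_R_of_incomparable hab hac nac nbc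
  have hScb : S c b := h.S_of_R_of_incomparable hcd hbc.symm (mt Or.symm nbc) (mt Or.symm nbd)
  obtain ⟨-, hStrans, -, -, -, hdisj, -⟩ := h
  exact hdisj a b (Or.inl hab) (Or.inl (hStrans a c b hSac hScb))

end IsCatalanPair

theorem catalan_pair_forbidden_posets_general {X : Type*}
    (S R : X → X → Prop) (h : IsCatalanPair S R) :
    (¬ ∃ x y z t : X, x ≠ y ∧ x ≠ z ∧ x ≠ t ∧ y ≠ z ∧ y ≠ t ∧ z ≠ t ∧
      R x y ∧ R z t ∧
      ¬ (R x z ∨ R z x) ∧ ¬ (R x t ∨ R t x) ∧ ¬ (R y z ∨ R z y) ∧ ¬ (R y t ∨ R t y)) ∧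
    (¬ ∃ x y z t : X, x ≠ y ∧ x ≠ z ∧ x ≠ t ∧ y ≠ z ∧ y ≠ t ∧ z ≠ t ∧
      R x y ∧ R x t ∧ R z t ∧
      ¬ (R x z ∨ R z x) ∧ ¬ (R y z ∨ R z y) ∧ ¬ (R y t ∨ R t y)) := by
  constructor
  · rintro ⟨x, y, z, t, -, hxz, -, hyz, -, -, hxy, hzt, nxz, -, nyz, nyt⟩
    exact h.false_of_R_of_R_of_incomparable hxy hzt hxz hyz nxz nyz nyt
  · rintro ⟨x, y, z, t, -, hxz, -, hyz, -, -, hxy, -, hzt, nxz, nyz, nyt⟩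
    exact h.false_of_R_of_R_of_incomparable hxy hzt hxz hyz nxz nyz nyt

theorem catalan_pair_forbidden_posets {X : Type*} [Finite X]
    (S R : X → X → Prop) (h : IsCatalanPair S R) :
    (¬ ∃ x y z t : X, x ≠ y ∧ x ≠ z ∧ x ≠ t ∧ y ≠ z ∧ y ≠ t ∧ z ≠ t ∧
      R x y ∧ R z t ∧
      ¬ (R x z ∨ R z x) ∧ ¬ (R x t ∨ R t x) ∧ ¬ (R y z ∨ R z y) ∧ ¬ (R y t ∨ R t y)) ∧
    (¬ ∃ x y z t : X, x ≠ y ∧ x ≠ z ∧ x ≠ t ∧ y ≠ z ∧ y ≠ t ∧ z ≠ t ∧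
      R x y ∧ R x t ∧ R z t ∧
      ¬ (R x z ∨ R z x) ∧ ¬ (R y z ∨ R z y) ∧ ¬ (R y t ∨ R t y)) :=
  catalan_pair_forbidden_posets_general S R h
end

section
/- Let R be a strict order on a finite set X such that [X,R] contains no subposet isomorphic to 2+2 and no subposet isomorphic to Z₄. Then there exists a relation S on X such that (S,R) is a Catalan pair. -/
/-!
Order `X` lexicographically by the size of the strict up-set `above R x`, then by the size of the
strict down-set `below R x`, then arbitrarily, and let `S` relate `R`-incomparable elements in the
reverse of this order. Because `R` avoids `2+2`, up-sets form a chain, as do down-sets, so comparing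
sizes amounts to comparing by inclusion; in particular `x S y` gives `above R y ⊆ above R x`, which
is `S ∘ R ⊆ R`. Transitivity is where `Z₄` is excluded: if `x S y S z` but `x R z`, then `x` is
below `z` but not below `y`, so the down-set criterion rules out `above R y ⊆ above R z`; but an
element above `y` and not above `z` would span a `2+2` or a `Z₄` together with `x`.
-/

section
variable {X : Type*} {R : X → X → Prop}

def HasTwoPlusTwo (R : X → X → Prop) : Prop :=
  ∃ x y z t : X, x ≠ y ∧ x ≠ z ∧ x ≠ t ∧ y ≠ z ∧ y ≠ t ∧ z ≠ t ∧
      R x y ∧ R z t ∧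
      ¬ (R x z ∨ R z x) ∧ ¬ (R x t ∨ R t x) ∧ ¬ (R y z ∨ R z y) ∧ ¬ (R y t ∨ R t y)

def HasZ4 (R : X → X → Prop) : Prop :=
  ∃ x y z t : X, x ≠ y ∧ x ≠ z ∧ x ≠ t ∧ y ≠ z ∧ y ≠ t ∧ z ≠ t ∧
      R x y ∧ R x t ∧ R z t ∧
      ¬ (R x z ∨ R z x) ∧ ¬ (R y z ∨ R z y) ∧ ¬ (R y t ∨ R t y)

theorem hasTwoPlusTwo_of (hirr : ∀ x, ¬ R x x) (htrans : ∀ x y z, R x y → R y z → R x z)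
    {x y z t : X} (hxy : R x y) (hzt : R z t) (hxt : ¬ R x t) (hzy : ¬ R z y) :
    HasTwoPlusTwo R := by
  refine ⟨x, y, z, t, ?_⟩
  grind

theorem hasZ4_of (hirr : ∀ x, ¬ R x x) (htrans : ∀ x y z, R x y → R y z → R x z)
    {x y z t : X} (hxy : R x y) (hxt : R x t) (hzt : R z t) (hxz : ¬ R x z) (hyt : ¬ R y t)
    (hzy : ¬ R z y) : HasZ4 R := by
  refine ⟨x, y, z, t, ?_⟩
  grind

def above (R : X → X → Prop) (x : X) : Set X := {y | R x y}

def below (R : X → X → Prop) (x : X) : Set X := {y | R y x}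

theorem above_subset_total (hirr : ∀ x, ¬ R x x) (htrans : ∀ x y z, R x y → R y z → R x z)
    (h22 : ¬ HasTwoPlusTwo R) (a b : X) : above R a ⊆ above R b ∨ above R b ⊆ above R a := by
  rw [or_iff_not_imp_left, Set.not_subset]
  rintro ⟨w, haw, hbw⟩ v hbv
  by_contra hav
  exact h22 (hasTwoPlusTwo_of hirr htrans haw hbv hav hbw)

theorem below_subset_total (hirr : ∀ x, ¬ R x x) (htrans : ∀ x y z, R x y → R y z → R x z)
    (h22 : ¬ HasTwoPlusTwo R) (a b : X) : below R a ⊆ below R b ∨ below R b ⊆ below R a := by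
  rw [or_iff_not_imp_left, Set.not_subset]
  rintro ⟨w, hwa, hwb⟩ v hvb
  by_contra hva
  exact h22 (hasTwoPlusTwo_of hirr htrans hwa hvb hwb hva)

theorem below_subset_below_of_not_above_subset (hirr : ∀ x, ¬ R x x)
    (htrans : ∀ x y z, R x y → R y z → R x z) (h22 : ¬ HasTwoPlusTwo R) (hZ4 : ¬ HasZ4 R)
    {p q : X} (hqp : ¬ R q p) (hpq : ¬ above R q ⊆ above R p) : below R p ⊆ below R q := by
  obtain ⟨v, hqv, hpv⟩ := Set.not_subset.mp hpq
  intro w hwp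
  by_contra hwq
  by_cases hwv : R w v
  · exact hZ4 (hasZ4_of hirr htrans hwp hwv hqv hwq hpv hqp)
  · exact h22 (hasTwoPlusTwo_of hirr htrans hwp hqv hwv hqp)

theorem Set.subset_of_ncard_le_of_total {α : Type*} {s t : Set α} (hs : s.Finite)
    (hst : s ⊆ t ∨ t ⊆ s) (h : s.ncard ≤ t.ncard) : s ⊆ t :=
  hst.elim id fun hts => (Set.eq_of_subset_of_ncard_le hts h hs).ge

def incompByKey (R : X → X → Prop) {α : Type*} [LT α] (key : X → α) (x y : X) : Prop :=
  ¬ R x y ∧ ¬ R y x ∧ key y < key x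

theorem isCatalanPair_incompByKey {α : Type*} [LinearOrder α] (hirr : ∀ x, ¬ R x x)
    (htrans : ∀ x y z, R x y → R y z → R x z) (h22 : ¬ HasTwoPlusTwo R) (hZ4 : ¬ HasZ4 R)
    {key : X → α} (hinj : Function.Injective key)
    (hkey : ∀ x y, key x < key y →
      above R x ⊆ above R y ∧ (above R y ⊆ above R x → below R x ⊆ below R y)) :
    IsCatalanPair (incompByKey R key) R := by
  refine ⟨fun x h => lt_irrefl _ h.2.2, ?_, hirr, htrans, ?_, ?_, ?_⟩
  · rintro x y z ⟨hxy, hyx, hyx'⟩ ⟨hyz, hzy, hzy'⟩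
    obtain ⟨habove, hbelow⟩ := hkey z y hzy'
    refine ⟨fun hxz => ?_, fun hzx => hyx (habove hzx), hzy'.trans hyx'⟩
    have hnot : ¬ above R y ⊆ above R z := fun h => hxy (hbelow h hxz)
    exact hxy (below_subset_below_of_not_above_subset hirr htrans h22 hZ4 hyz hnot hxz)
  · intro x y hne
    by_contra! ⟨⟨hxy, hyx⟩, hSxy, hSyx⟩
    rcases lt_or_gt_of_ne (hinj.ne hne) with h | h
    · exact hSyx ⟨hyx, hxy, h⟩
    · exact hSxy ⟨hxy, hyx, h⟩
  · exact fun x y hR hS => hS.elim (fun h => hR.elim h.1 h.2.1) (fun h => hR.elim h.2.1 h.1)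
  · rintro x y z ⟨-, -, hyx⟩ hyz
    exact (hkey y x hyx).1 hyz

theorem exists_injective_key_ordering_above_below [Finite X] (hirr : ∀ x, ¬ R x x)
    (htrans : ∀ x y z, R x y → R y z → R x z)
    (h22 : ¬ HasTwoPlusTwo R) :
    ∃ key : X → ℕ ×ₗ ℕ ×ₗ ℕ, Function.Injective key ∧ ∀ x y, key x < key y →
      above R x ⊆ above R y ∧ (above R y ⊆ above R x → below R x ⊆ below R y) := by
  obtain ⟨f, hf⟩ := exists_injective_nat X
  refine ⟨fun x => toLex ((above R x).ncard, toLex ((below R x).ncard, f x)),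
    fun x y h => by simp only [EmbeddingLike.apply_eq_iff_eq, Prod.mk.injEq] at h; exact hf h.2.2, fun x y hlt => ?_⟩
  have hle : (above R x).ncard ≤ (above R y).ncard ∧
      ((above R y).ncard ≤ (above R x).ncard → (below R x).ncard ≤ (below R y).ncard) := by
    simp only [Prod.Lex.toLex_lt_toLex] at hlt
    omega
  refine ⟨Set.subset_of_ncard_le_of_total (Set.toFinite _)
    (above_subset_total hirr htrans h22 x y) hle.1, fun h => ?_⟩
  exact Set.subset_of_ncard_le_of_total (Set.toFinite _) (below_subset_total hirr htrans h22 x y)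
    (hle.2 (Set.ncard_le_ncard h))
end

theorem forbidden_posets_imp_catalan_pair {X : Type*} [Finite X]
    (R : X → X → Prop)
    (hirr : ∀ x, ¬ R x x) (htrans : ∀ x y z, R x y → R y z → R x z)
    (h22 : ¬ ∃ x y z t : X, x ≠ y ∧ x ≠ z ∧ x ≠ t ∧ y ≠ z ∧ y ≠ t ∧ z ≠ t ∧
      R x y ∧ R z t ∧
      ¬ (R x z ∨ R z x) ∧ ¬ (R x t ∨ R t x) ∧ ¬ (R y z ∨ R z y) ∧ ¬ (R y t ∨ R t y))
    (hZ4 : ¬ ∃ x y z t : X, x ≠ y ∧ x ≠ z ∧ x ≠ t ∧ y ≠ z ∧ y ≠ t ∧ z ≠ t ∧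
      R x y ∧ R x t ∧ R z t ∧
      ¬ (R x z ∨ R z x) ∧ ¬ (R y z ∨ R z y) ∧ ¬ (R y t ∨ R t y)) :
    ∃ S : X → X → Prop, IsCatalanPair S R := by
  obtain ⟨key, hinj, hkey⟩ := exists_injective_key_ordering_above_below hirr htrans h22
  exact ⟨incompByKey R key, isCatalanPair_incompByKey hirr htrans h22 hZ4 hinj hkey⟩
end
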